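/- arXiv:2205.06812 — 7 statements merged into one kernel-verified Lean document; each statement's English description precedes it below -/
import Mathlib

section
/- Fix a nonnull type θ₁ ∈ Θ₁ and a menu F, and for π₀ ∈ [0,1] let Q_{π₀} = π₀·δ_{θ₀} + (1−π₀)·δ_{θ₁} be the two-point mixture over types. Then the following are equivalent: (i) for every θ₀ ∈ Θ₀ and every best-response selection, liminf_{π₀→1} U(F, Q_{π₀}) ≥ 0; (ii) F is incentive-aligned. Moreover, if F is not incentive-aligned, then for some θ₀ ∈ Θ₀ and every best-response selection, lim_{π₀→1} U(F, Q_{π₀}) = E_{Z∼P_{θ₀}}[u(θ₀, f^br(Z;θ₀,F))] < 0. -/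
/-!
If `F` is incentive-aligned, no null type opts in, so as `π₀ → 1` the mixture utility tends
to `0`. Otherwise some null type `θ₀` opts in; its best response `g` has `∫ g > C > 0`, so
`g > 0` on a set of positive measure, where `u θ₀ ∘ g < 0`, while `u θ₀ ∘ g ≤ 0` everywhere.
Hence its contribution is strictly negative, and it is the limit of the mixture utility.
-/

open MeasureTheory Filter

variable {Z Θ : Type*} [MeasurableSpace Z]

/-- An agent of type `θ` opts in iff some license in the menu has expected
value exceeding the trial cost `C` (i.e. the supremum over the menu exceeds `C`). -/
def OptsIn (P : Θ → Measure Z) (C : ℝ) (F : Set (Z → ℝ)) (θ : Θ) : Prop :=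
  ∃ f ∈ F, C < ∫ z, f z ∂(P θ)

/-- A best-response selection assigns to each opting-in type a license in the
menu maximizing its expected value. -/
def IsBRSelection (P : Θ → Measure Z) (C : ℝ) (F : Set (Z → ℝ))
    (fbr : Θ → Z → ℝ) : Prop :=
  ∀ θ : Θ, OptsIn P C F θ →
    fbr θ ∈ F ∧ ∀ g ∈ F, ∫ z, g z ∂(P θ) ≤ ∫ z, fbr θ z ∂(P θ)

open Classical in
/-- The utility contributed by an agent of type `θ`: zero if the agent opts out,
and the expected utility of the best-response license otherwise. -/
noncomputable def contrib (P : Θ → Measure Z) (C : ℝ) (F : Set (Z → ℝ))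
    (u : Θ → ℝ → ℝ) (fbr : Θ → Z → ℝ) (θ : Θ) : ℝ :=
  if OptsIn P C F θ then ∫ z, u θ (fbr θ z) ∂(P θ) else 0

open Topology

theorem integral_comp_neg_of_integral_pos {α : Type*} [MeasurableSpace α] {μ : Measure α}
    {g : α → ℝ} {v : ℝ → ℝ} (hg : 0 ≤ g) (hgi : Integrable g μ) (hpos : 0 < ∫ x, g x ∂μ)
    (hv0 : v 0 ≤ 0) (hv : ∀ L, 0 < L → v L < 0) (hvi : Integrable (fun x => v (g x)) μ) :
    ∫ x, v (g x) ∂μ < 0 := by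
  have hvg : ∀ x, v (g x) ≤ 0 := fun x =>
    (hg x).eq_or_lt.elim (fun h => h ▸ hv0) fun h => (hv _ h).le
  have hsupp : Function.support g ⊆ Function.support fun x => -v (g x) := fun x hx =>
    neg_ne_zero.2 (hv _ ((hg x).lt_of_ne (Ne.symm hx))).ne
  have hneg : 0 < ∫ x, -v (g x) ∂μ :=
    (integral_pos_iff_support_of_nonneg (fun x => neg_nonneg.2 (hvg x)) hvi.neg).2 <|
      ((integral_pos_iff_support_of_nonneg hg hgi).1 hpos).trans_le (measure_mono hsupp)
  rw [integral_neg] at hneg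
  linarith

theorem tendsto_mixture_nhdsWithin_Ico_one (a b : ℝ) :
    Tendsto (fun π : ℝ => π * a + (1 - π) * b) (𝓝[Set.Ico 0 1] 1) (𝓝 a) := by
  have h : Continuous fun π : ℝ => π * a + (1 - π) * b := by fun_prop
  simpa using (h.tendsto 1).mono_left nhdsWithin_le_nhds

instance : (𝓝[Set.Ico (0 : ℝ) 1] 1).NeBot := right_nhdsWithin_Ico_neBot zero_lt_one

section Contract

variable {P : Θ → Measure Z} {C : ℝ} {F : Set (Z → ℝ)} {u : Θ → ℝ → ℝ} {fbr : Θ → Z → ℝ}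
  {θ : Θ}

theorem contrib_of_optsIn (h : OptsIn P C F θ) :
    contrib P C F u fbr θ = ∫ z, u θ (fbr θ z) ∂(P θ) :=
  if_pos h

theorem contrib_of_not_optsIn (h : ¬ OptsIn P C F θ) : contrib P C F u fbr θ = 0 :=
  if_neg h

theorem not_optsIn_of_forall_integral_le (h : ∀ f ∈ F, ∫ z, f z ∂(P θ) ≤ C) :
    ¬ OptsIn P C F θ := fun ⟨f, hf, hfC⟩ => (h f hf).not_gt hfC

theorem integral_utility_brSelection_neg (hC : 0 < C) (hnonneg : ∀ f ∈ F, ∀ z, 0 ≤ f z)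
    (hint : ∀ f ∈ F, Integrable f (P θ)) (huint : ∀ f ∈ F, Integrable (fun z => u θ (f z)) (P θ))
    (hu0neg : ∀ L : ℝ, 0 < L → u θ L < 0) (hu00 : u θ 0 ≤ 0)
    (hbr : IsBRSelection P C F fbr) (hopt : OptsIn P C F θ) :
    ∫ z, u θ (fbr θ z) ∂(P θ) < 0 := by
  obtain ⟨f, hf, hfC⟩ := hopt
  obtain ⟨hmem, hmax⟩ := hbr θ ⟨f, hf, hfC⟩
  exact integral_comp_neg_of_integral_pos (hnonneg _ hmem) (hint _ hmem)
    (hC.trans (hfC.trans_le (hmax f hf))) hu00 hu0neg (huint _ hmem)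

theorem exists_null_tendsto_neg_of_not_incentiveAligned {Θ₀ : Set Θ} (θ₁ : Θ) (hC : 0 < C)
    (hnonneg : ∀ f ∈ F, ∀ z, 0 ≤ f z) (hint : ∀ f ∈ F, ∀ θ : Θ, Integrable f (P θ))
    (hu0neg : ∀ θ₀ ∈ Θ₀, ∀ L : ℝ, 0 < L → u θ₀ L < 0) (hu00 : ∀ θ₀ ∈ Θ₀, u θ₀ 0 ≤ 0)
    (huint : ∀ θ : Θ, ∀ f ∈ F, Integrable (fun z => u θ (f z)) (P θ))
    (hna : ¬ ∀ θ₀ ∈ Θ₀, ∀ f ∈ F, ∫ z, f z ∂(P θ₀) ≤ C) :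
    ∃ θ₀ ∈ Θ₀, ∀ fbr, IsBRSelection P C F fbr →
      Tendsto (fun π₀ : ℝ => π₀ * contrib P C F u fbr θ₀ + (1 - π₀) * contrib P C F u fbr θ₁)
        (𝓝[Set.Ico 0 1] 1) (𝓝 (∫ z, u θ₀ (fbr θ₀ z) ∂(P θ₀))) ∧
      ∫ z, u θ₀ (fbr θ₀ z) ∂(P θ₀) < 0 := by
  push Not at hna
  obtain ⟨θ₀, hθ₀, f, hf, hfC⟩ := hna
  have hopt : OptsIn P C F θ₀ := ⟨f, hf, hfC⟩
  refine ⟨θ₀, hθ₀, fun fbr hbr => ⟨?_, ?_⟩⟩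
  · rw [contrib_of_optsIn hopt]
    exact tendsto_mixture_nhdsWithin_Ico_one _ _
  · exact integral_utility_brSelection_neg hC hnonneg (fun f hf => hint f hf θ₀)
      (huint θ₀) (hu0neg θ₀ hθ₀) (hu00 θ₀ hθ₀) hbr hopt

end Contract

theorem stmt_2_general
    (P : Θ → Measure Z)
    (Θ₀ : Set Θ) (C : ℝ) (hC : 0 < C)
    (F : Set (Z → ℝ))
    (hnonneg : ∀ f ∈ F, ∀ z, 0 ≤ f z)
    (hint : ∀ f ∈ F, ∀ θ : Θ, Integrable f (P θ))
    (u : Θ → ℝ → ℝ)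
    (hu0neg : ∀ θ₀ ∈ Θ₀, ∀ L : ℝ, 0 < L → u θ₀ L < 0)
    (hu00 : ∀ θ₀ ∈ Θ₀, u θ₀ 0 ≤ 0)
    (huint : ∀ θ : Θ, ∀ f ∈ F, Integrable (fun z => u θ (f z)) (P θ))
    (hbrex : ∃ fbr, IsBRSelection P C F fbr)
    (θ₁ : Θ) :
    ((∀ θ₀ ∈ Θ₀, ∀ fbr, IsBRSelection P C F fbr →
        0 ≤ liminf (fun π₀ : ℝ =>
            π₀ * contrib P C F u fbr θ₀ + (1 - π₀) * contrib P C F u fbr θ₁)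
          (nhdsWithin 1 (Set.Ico (0 : ℝ) 1))) ↔
      (∀ θ₀ ∈ Θ₀, ∀ f ∈ F, ∫ z, f z ∂(P θ₀) ≤ C)) ∧
    (¬ (∀ θ₀ ∈ Θ₀, ∀ f ∈ F, ∫ z, f z ∂(P θ₀) ≤ C) →
      ∃ θ₀ ∈ Θ₀, ∀ fbr, IsBRSelection P C F fbr →
        Tendsto (fun π₀ : ℝ =>
            π₀ * contrib P C F u fbr θ₀ + (1 - π₀) * contrib P C F u fbr θ₁)
          (nhdsWithin 1 (Set.Ico (0 : ℝ) 1))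
          (nhds (∫ z, u θ₀ (fbr θ₀ z) ∂(P θ₀))) ∧
        ∫ z, u θ₀ (fbr θ₀ z) ∂(P θ₀) < 0) := by
  have hmisaligned := exists_null_tendsto_neg_of_not_incentiveAligned θ₁ hC hnonneg hint
    hu0neg hu00 huint
  refine ⟨⟨fun h => ?_, fun hal θ₀ hθ₀ fbr _ => ?_⟩, hmisaligned⟩
  · by_contra hna
    obtain ⟨θ₀, hθ₀, hlim⟩ := hmisaligned hna
    obtain ⟨fbr, hbr⟩ := hbrex
    obtain ⟨hT, hneg⟩ := hlim fbr hbr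
    exact (h θ₀ hθ₀ fbr hbr).not_gt (hT.liminf_eq ▸ hneg)
  · rw [contrib_of_not_optsIn (not_optsIn_of_forall_integral_le (hal θ₀ hθ₀)),
      (tendsto_mixture_nhdsWithin_Ico_one _ _).liminf_eq]

/-- For the two-point mixture `Q_{π₀} = π₀·δ_{θ₀} + (1-π₀)·δ_{θ₁}`,
nonnegativity of `liminf_{π₀→1} U(F, Q_{π₀})` for every null type and every
best-response selection is equivalent to incentive alignment; moreover, if `F` is not
incentive-aligned then for some null `θ₀` the utility converges, as `π₀ → 1`, to
`E_{P_{θ₀}}[u(θ₀, f^br(Z; θ₀, F))] < 0`. -/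
theorem stmt_2
    (P : Θ → Measure Z) [∀ θ, IsProbabilityMeasure (P θ)]
    (Θ₀ : Set Θ) (C : ℝ) (hC : 0 < C)
    (F : Set (Z → ℝ))
    (hmeas : ∀ f ∈ F, Measurable f)
    (hnonneg : ∀ f ∈ F, ∀ z, 0 ≤ f z)
    (hint : ∀ f ∈ F, ∀ θ : Θ, Integrable f (P θ))
    (u : Θ → ℝ → ℝ) (a₁ : ℝ)
    (hu1 : ∀ θ₁ ∉ Θ₀, ∀ L : ℝ, 0 ≤ L → 0 ≤ u θ₁ L ∧ u θ₁ L ≤ a₁)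
    (hu1mono : ∀ θ₁ ∉ Θ₀, MonotoneOn (u θ₁) (Set.Ici 0))
    (hu0neg : ∀ θ₀ ∈ Θ₀, ∀ L : ℝ, 0 < L → u θ₀ L < 0)
    (hu00 : ∀ θ₀ ∈ Θ₀, u θ₀ 0 ≤ 0)
    (hu0anti : ∀ θ₀ ∈ Θ₀, AntitoneOn (u θ₀) (Set.Ici 0))
    (huint : ∀ θ : Θ, ∀ f ∈ F, Integrable (fun z => u θ (f z)) (P θ))
    (hbrex : ∃ fbr, IsBRSelection P C F fbr)
    (θ₁ : Θ) (hθ₁ : θ₁ ∉ Θ₀) :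
    ((∀ θ₀ ∈ Θ₀, ∀ fbr, IsBRSelection P C F fbr →
        0 ≤ liminf (fun π₀ : ℝ =>
            π₀ * contrib P C F u fbr θ₀ + (1 - π₀) * contrib P C F u fbr θ₁)
          (nhdsWithin 1 (Set.Ico (0 : ℝ) 1))) ↔
      (∀ θ₀ ∈ Θ₀, ∀ f ∈ F, ∫ z, f z ∂(P θ₀) ≤ C)) ∧
    (¬ (∀ θ₀ ∈ Θ₀, ∀ f ∈ F, ∫ z, f z ∂(P θ₀) ≤ C) →
      ∃ θ₀ ∈ Θ₀, ∀ fbr, IsBRSelection P C F fbr →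
        Tendsto (fun π₀ : ℝ =>
            π₀ * contrib P C F u fbr θ₀ + (1 - π₀) * contrib P C F u fbr θ₁)
          (nhdsWithin 1 (Set.Ico (0 : ℝ) 1))
          (nhds (∫ z, u θ₀ (fbr θ₀ z) ∂(P θ₀))) ∧
        ∫ z, u θ₀ (fbr θ₀ z) ∂(P θ₀) < 0) :=
  stmt_2_general P Θ₀ C hC F hnonneg hint u hu0neg hu00 huint hbrex θ₁
end

section
/- Assume Θ₀ is nonempty and the maximal class F̄ of admissible license functions contains the constant-zero function (so that at least one incentive-aligned menu exists). For a menu F ⊆ F̄ and a best-response selection, let V(F) = inf over all finitely supported probability distributions Q on Θ of U(F,Q). Then: (i) sup over all menus F' ⊆ F̄ and best-response selections of V(F') equals 0; and (ii) a menu F attains this maximin value, i.e., V(F) = 0 for every best-response selection, if and only if F is incentive-aligned. In particular, a menu is maximin optimal if and only if it is incentive-aligned. -/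
open MeasureTheory Filter

variable {Z Θ : Type*} [MeasurableSpace Z]

/-- The principal's expected utility `U(F, Q)` for a finitely supported distribution
`Q` given by a finite set `s` of types and weights `w`. -/
noncomputable def Util (P : Θ → Measure Z) (C : ℝ) (F : Set (Z → ℝ))
    (u : Θ → ℝ → ℝ) (fbr : Θ → Z → ℝ) (s : Finset Θ) (w : Θ → ℝ) : ℝ :=
  ∑ θ ∈ s, w θ * contrib P C F u fbr θ

/-- The worst-case utility `V(F)`: the infimum (in the extended reals) of `U(F, Q)`
over all finitely supported distributions `Q` over types. -/
noncomputable def Vval (P : Θ → Measure Z) (C : ℝ) (F : Set (Z → ℝ))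
    (u : Θ → ℝ → ℝ) (fbr : Θ → Z → ℝ) : EReal :=
  sInf {x : EReal | ∃ (s : Finset Θ) (w : Θ → ℝ),
    (∀ θ, 0 ≤ w θ) ∧ (∑ θ ∈ s, w θ) = 1 ∧ x = (Util P C F u fbr s w : EReal)}

/-- Assuming `Θ₀` is nonempty and the admissible class `F̄` contains
the constant-zero license: (i) the maximin value
`sup_{F' ⊆ F̄, best responses} inf_Q U(F', Q)` equals `0`; and (ii) a menu `F ⊆ F̄`
attains this value for every best-response selection if and only if it is
incentive-aligned. -/
theorem stmt_4
    (P : Θ → Measure Z) [∀ θ, IsProbabilityMeasure (P θ)]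
    (Θ₀ : Set Θ) (hΘ₀ : Θ₀.Nonempty) (C : ℝ) (hC : 0 < C)
    (Fbar : Set (Z → ℝ))
    (hmeas : ∀ f ∈ Fbar, Measurable f)
    (hnonneg : ∀ f ∈ Fbar, ∀ z, 0 ≤ f z)
    (hint : ∀ f ∈ Fbar, ∀ θ : Θ, Integrable f (P θ))
    (hzero : (fun _ : Z => (0 : ℝ)) ∈ Fbar)
    (u : Θ → ℝ → ℝ) (a₁ : ℝ)
    (hu1 : ∀ θ₁ ∉ Θ₀, ∀ L : ℝ, 0 ≤ L → 0 ≤ u θ₁ L ∧ u θ₁ L ≤ a₁)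
    (hu1mono : ∀ θ₁ ∉ Θ₀, MonotoneOn (u θ₁) (Set.Ici 0))
    (hu0neg : ∀ θ₀ ∈ Θ₀, ∀ L : ℝ, 0 < L → u θ₀ L < 0)
    (hu00 : ∀ θ₀ ∈ Θ₀, u θ₀ 0 ≤ 0)
    (hu0anti : ∀ θ₀ ∈ Θ₀, AntitoneOn (u θ₀) (Set.Ici 0))
    (huint : ∀ θ : Θ, ∀ f ∈ Fbar, Integrable (fun z => u θ (f z)) (P θ))
    (F : Set (Z → ℝ)) (hF : F ⊆ Fbar)
    (hbrex : ∃ fbr, IsBRSelection P C F fbr) :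
    sSup {x : EReal | ∃ F' ⊆ Fbar, ∃ fbr, IsBRSelection P C F' fbr ∧
        x = Vval P C F' u fbr} = 0 ∧
    ((∀ fbr, IsBRSelection P C F fbr → Vval P C F u fbr = 0) ↔
      (∀ θ₀ ∈ Θ₀, ∀ f ∈ F, ∫ z, f z ∂(P θ₀) ≤ C)) := by
  classical
  obtain ⟨θ₀, hθ₀⟩ := hΘ₀
  -- membership of point masses in the Vval index set
  have hmem : ∀ (F' : Set (Z → ℝ)) (fbr : Θ → Z → ℝ) (θ : Θ),
      ((contrib P C F' u fbr θ : ℝ) : EReal) ∈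
        {x : EReal | ∃ (s : Finset Θ) (w : Θ → ℝ),
          (∀ t, 0 ≤ w t) ∧ (∑ t ∈ s, w t) = 1 ∧
          x = (Util P C F' u fbr s w : EReal)} := by
    intro F' fbr θ
    refine ⟨{θ}, fun t => if t = θ then 1 else 0, ?_, by simp, ?_⟩
    · intro t; dsimp only; split <;> norm_num
    · simp [Util]
  -- u θ₀ L ≤ 0 for L ≥ 0 when θ₀ ∈ Θ₀
  have hu0le : ∀ t ∈ Θ₀, ∀ L : ℝ, 0 ≤ L → u t L ≤ 0 := by
    intro t ht L hL
    rcases hL.eq_or_lt with h | h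
    · rw [← h]; exact hu00 t ht
    · exact (hu0neg t ht L h).le
  -- contrib at a null type is ≤ 0 for any incentive menu with BR selection
  have hcon0 : ∀ (F' : Set (Z → ℝ)), F' ⊆ Fbar → ∀ fbr, IsBRSelection P C F' fbr →
      ∀ t ∈ Θ₀, contrib P C F' u fbr t ≤ 0 := by
    intro F' hF' fbr hbr t ht
    unfold contrib
    split_ifs with h
    · obtain ⟨hmemF, _⟩ := hbr t h
      exact integral_nonpos fun z =>
        hu0le t ht _ (hnonneg _ (hF' hmemF) z)
    · exact le_refl 0
  -- Vval ≤ 0 for any menu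
  have hVle : ∀ (F' : Set (Z → ℝ)), F' ⊆ Fbar → ∀ fbr, IsBRSelection P C F' fbr →
      Vval P C F' u fbr ≤ 0 := by
    intro F' hF' fbr hbr
    refine le_trans (sInf_le (hmem F' fbr θ₀)) ?_
    have := hcon0 F' hF' fbr hbr θ₀ hθ₀
    exact_mod_cast this
  -- the zero menu
  set F0 : Set (Z → ℝ) := {fun _ => (0 : ℝ)} with hF0
  have hF0sub : F0 ⊆ Fbar := by
    intro f hf; rw [hF0, Set.mem_singleton_iff] at hf; rw [hf]; exact hzero
  have hnoopt : ∀ θ : Θ, ¬ OptsIn P C F0 θ := by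
    intro θ ⟨f, hf, hlt⟩
    rw [hF0, Set.mem_singleton_iff] at hf
    rw [hf] at hlt
    simp at hlt
    linarith
  have hbr0 : IsBRSelection P C F0 (fun _ _ => 0) := by
    intro θ h; exact absurd h (hnoopt θ)
  have hcontrib0 : ∀ θ, contrib P C F0 u (fun _ _ => 0) θ = 0 := by
    intro θ; unfold contrib; rw [if_neg (hnoopt θ)]
  have hV0 : Vval P C F0 u (fun _ _ => 0) = 0 := by
    apply le_antisymm
    · have h0 := hmem F0 (fun _ _ => 0) θ₀
      rw [hcontrib0 θ₀] at h0
      exact_mod_cast sInf_le h0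
    · apply le_sInf
      rintro x ⟨s, w, hw, hsum, rfl⟩
      have : Util P C F0 u (fun _ _ => 0) s w = 0 := by
        unfold Util; apply Finset.sum_eq_zero; intro t _
        rw [hcontrib0 t, mul_zero]
      rw [this]; exact_mod_cast le_refl (0 : EReal)
  constructor
  · -- part (i)
    apply le_antisymm
    · apply sSup_le
      rintro x ⟨F', hF', fbr, hbr, rfl⟩
      exact hVle F' hF' fbr hbr
    · have : (0 : EReal) ∈ {x : EReal | ∃ F' ⊆ Fbar, ∃ fbr,
          IsBRSelection P C F' fbr ∧ x = Vval P C F' u fbr} :=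
        ⟨F0, hF0sub, fun _ _ => 0, hbr0, hV0.symm⟩
      exact le_sSup this
  · constructor
    · -- Vval = 0 always ⇒ incentive aligned
      intro h t ht f hf
      by_contra hlt
      push_neg at hlt
      obtain ⟨fbr, hbr⟩ := hbrex
      have hV := h fbr hbr
      have hop : OptsIn P C F t := ⟨f, hf, hlt⟩
      obtain ⟨hmemF, hmax⟩ := hbr t hop
      have hEbr : C < ∫ z, fbr t z ∂(P t) := lt_of_lt_of_le hlt (hmax f hf)
      have hgle : ∀ z, u t (fbr t z) ≤ 0 := fun z =>
        hu0le t ht _ (hnonneg _ (hF hmemF) z)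
      have hgint : Integrable (fun z => u t (fbr t z)) (P t) :=
        huint t (fbr t) (hF hmemF)
      have hglt : ∫ z, u t (fbr t z) ∂(P t) < 0 := by
        rcases lt_or_eq_of_le (integral_nonpos hgle) with h' | h'
        · exact h'
        · exfalso
          have hnegint : Integrable (fun z => -(u t (fbr t z))) (P t) := hgint.neg
          have hzero' : ∫ z, -(u t (fbr t z)) ∂(P t) = 0 := by
            rw [integral_neg, h']; ring
          have hae := (integral_eq_zero_iff_of_nonneg
            (fun z => neg_nonneg.mpr (hgle z)) hnegint).mp hzero'
          have hae' : (fun z => fbr t z) =ᵐ[P t] 0 := by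
            filter_upwards [hae] with z hz
            have hz0 : u t (fbr t z) = 0 := by
              have := hz; simpa using this
            by_contra hne
            have hpos : 0 < fbr t z :=
              lt_of_le_of_ne (hnonneg _ (hF hmemF) z) (Ne.symm hne)
            exact absurd hz0 (ne_of_lt (hu0neg t ht _ hpos))
          have : ∫ z, fbr t z ∂(P t) = 0 := by
            rw [integral_congr_ae hae']; simp
          linarith
      have hVlt : Vval P C F u fbr ≤ ((∫ z, u t (fbr t z) ∂(P t) : ℝ) : EReal) := by
        have h0 := hmem F fbr t
        have : contrib P C F u fbr t = ∫ z, u t (fbr t z) ∂(P t) := by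
          unfold contrib; rw [if_pos hop]
        rw [this] at h0
        exact sInf_le h0
      rw [hV] at hVlt
      have : (0 : ℝ) ≤ ∫ z, u t (fbr t z) ∂(P t) := by exact_mod_cast hVlt
      linarith
    · -- incentive aligned ⇒ Vval = 0 always
      intro hIA fbr hbr
      have hnoopt0 : ∀ t ∈ Θ₀, ¬ OptsIn P C F t := by
        intro t ht ⟨f, hf, hlt⟩
        exact absurd hlt (not_lt.mpr (hIA t ht f hf))
      have hconge : ∀ θ, 0 ≤ contrib P C F u fbr θ := by
        intro θ
        unfold contrib
        split_ifs with h
        · by_cases hθ : θ ∈ Θ₀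
          · exact absurd h (hnoopt0 θ hθ)
          · obtain ⟨hmemF, _⟩ := hbr θ h
            exact integral_nonneg fun z =>
              (hu1 θ hθ _ (hnonneg _ (hF hmemF) z)).1
        · exact le_refl 0
      apply le_antisymm
      · have h0 := hmem F fbr θ₀
        have hc : contrib P C F u fbr θ₀ = 0 := by
          unfold contrib; rw [if_neg (hnoopt0 θ₀ hθ₀)]
        rw [hc] at h0
        exact_mod_cast sInf_le h0
      · apply le_sInf
        rintro x ⟨s, w, hw, hsum, rfl⟩
        have : (0 : ℝ) ≤ Util P C F u fbr s w := by
          unfold Util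
          exact Finset.sum_nonneg fun t _ => mul_nonneg (hw t) (hconge t)
        exact_mod_cast this
end

section
/- Let F = C·E be the menu of all rescaled e-values within the admissible class, i.e., F = { f ∈ F̄ : E_{Z∼P_{θ₀}}[f(Z)] ≤ C for all θ₀ ∈ Θ₀ }, and let F' ⊆ F̄ be any other menu whose statistical contract is incentive-aligned. Assume that for each θ₁ ∈ Θ₁ the principal's utility is affine in the license value: u(θ₁,L) = g₀(θ₁) + g₁(θ₁)·L with g₀(θ₁) ≥ 0 and g₁(θ₁) ≥ 0. Then for every finitely supported probability distribution Q on Θ and all best-response selections for F and F', U(F,Q) ≥ U(F',Q); the menu of all rescaled e-values has the highest utility among incentive-aligned menus. -/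
open MeasureTheory Filter

variable {Z Θ : Type*} [MeasurableSpace Z]

/-- Under a utility affine in the license value on nonnull types
(with nonnegative coefficients), the menu `F = C·E` of all rescaled e-values within
the admissible class has utility at least that of any other incentive-aligned menu
`F' ⊆ F̄`, for every finitely supported distribution over types and all
best-response selections. -/
theorem stmt_5
    (P : Θ → Measure Z) [∀ θ, IsProbabilityMeasure (P θ)]
    (Θ₀ : Set Θ) (C : ℝ) (hC : 0 < C)
    (Fbar : Set (Z → ℝ))
    (hmeas : ∀ f ∈ Fbar, Measurable f)
    (hnonneg : ∀ f ∈ Fbar, ∀ z, 0 ≤ f z)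
    (hint : ∀ f ∈ Fbar, ∀ θ : Θ, Integrable f (P θ))
    (u : Θ → ℝ → ℝ) (g₀ g₁ : Θ → ℝ)
    (haff : ∀ θ₁ ∉ Θ₀, ∀ L : ℝ, 0 ≤ L → u θ₁ L = g₀ θ₁ + g₁ θ₁ * L)
    (hg₀ : ∀ θ₁ ∉ Θ₀, 0 ≤ g₀ θ₁)
    (hg₁ : ∀ θ₁ ∉ Θ₀, 0 ≤ g₁ θ₁)
    -- `F` is the menu of all rescaled e-values within the admissible class:
    (F : Set (Z → ℝ))
    (hFdef : F = {f ∈ Fbar | ∀ θ₀ ∈ Θ₀, ∫ z, f z ∂(P θ₀) ≤ C})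
    -- `F'` is any other incentive-aligned menu within the admissible class:
    (F' : Set (Z → ℝ)) (hF' : F' ⊆ Fbar)
    (hIA' : ∀ θ₀ ∈ Θ₀, ∀ f ∈ F', ∫ z, f z ∂(P θ₀) ≤ C)
    (fbr : Θ → Z → ℝ) (hfbr : IsBRSelection P C F fbr)
    (fbr' : Θ → Z → ℝ) (hfbr' : IsBRSelection P C F' fbr')
    (s : Finset Θ) (w : Θ → ℝ)
    (hw : ∀ θ, 0 ≤ w θ) (hw1 : ∑ θ ∈ s, w θ = 1) :
    ∑ θ ∈ s, w θ * contrib P C F' u fbr' θ ≤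
      ∑ θ ∈ s, w θ * contrib P C F u fbr θ := by

  have hsub : F' ⊆ F := by
    intro f hf
    rw [hFdef]
    exact ⟨hF' hf, fun θ₀ h₀ => hIA' θ₀ h₀ f hf⟩
  have hFbar : F ⊆ Fbar := by rw [hFdef]; exact fun f hf => hf.1
  -- integral of affine map
  have key : ∀ θ ∉ Θ₀, ∀ f ∈ Fbar, ∫ z, u θ (f z) ∂(P θ) = g₀ θ + g₁ θ * ∫ z, f z ∂(P θ) := by
    intro θ hθ f hf
    have : ∀ z, u θ (f z) = g₀ θ + g₁ θ * f z := fun z => haff θ hθ (f z) (hnonneg f hf z)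
    simp only [this]
    rw [integral_add (integrable_const _) ((hint f hf θ).const_mul _),
      integral_const, integral_const_mul]
    simp
  have hIAF : ∀ θ₀ ∈ Θ₀, ∀ f ∈ F, ∫ z, f z ∂(P θ₀) ≤ C := by
    rw [hFdef]; exact fun θ₀ h₀ f hf => hf.2 θ₀ h₀
  apply Finset.sum_le_sum
  intro θ _
  apply mul_le_mul_of_nonneg_left _ (hw θ)
  by_cases h' : OptsIn P C F' θ
  · have h : OptsIn P C F θ := by
      obtain ⟨f, hf, hc⟩ := h'
      exact ⟨f, hsub hf, hc⟩
    have hθ : θ ∉ Θ₀ := by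
      intro h0
      obtain ⟨f, hf, hc⟩ := h'
      exact absurd (hIA' θ h0 f hf) (not_le.mpr hc)
    obtain ⟨hmem', hmax'⟩ := hfbr' θ h'
    obtain ⟨hmem, hmax⟩ := hfbr θ h
    simp only [contrib, if_pos h', if_pos h]
    rw [key θ hθ _ (hF' hmem'), key θ hθ _ (hFbar hmem)]
    have := hmax (fbr' θ) (hsub hmem')
    nlinarith [hg₁ θ hθ]
  · by_cases h : OptsIn P C F θ
    · have hθ : θ ∉ Θ₀ := by
        intro h0
        obtain ⟨f, hf, hc⟩ := h
        exact absurd (hIAF θ h0 f hf) (not_le.mpr hc)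
      obtain ⟨hmem, _⟩ := hfbr θ h
      simp only [contrib, if_neg h', if_pos h]
      rw [key θ hθ _ (hFbar hmem)]
      have hi : 0 ≤ ∫ z, fbr θ z ∂(P θ) :=
        integral_nonneg (hnonneg _ (hFbar hmem))
      nlinarith [hg₀ θ hθ, hg₁ θ hθ]
    · simp [contrib, if_neg h', if_neg h]
end

section
/- Let F = C·E be the menu of all rescaled e-values within the admissible class, i.e., F = { f ∈ F̄ : E_{Z∼P_{θ₀}}[f(Z)] ≤ C for all θ₀ ∈ Θ₀ }, and let F' ⊆ F̄ be any other menu whose statistical contract is incentive-aligned. Then for every finitely supported probability distribution Q on Θ and all best-response selections for F and F', the menu F results in no fewer opting-in agents (every type that opts in under F' also opts in under F) and a larger expected market size: E_{θ∼Q}[ 1{θ opts in under F} · E_{Z∼P_θ}[f^br(Z;θ,F)] ] ≥ E_{θ∼Q}[ 1{θ opts in under F'} · E_{Z∼P_θ}[f^br(Z;θ,F')] ]. -/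
open MeasureTheory Filter

variable {Z Θ : Type*} [MeasurableSpace Z]

open Classical in
/-- The expected license (market size) contributed by an agent of type `θ`:
zero if the agent opts out, and the expected best-response license value otherwise. -/
noncomputable def marketContrib (P : Θ → Measure Z) (C : ℝ) (F : Set (Z → ℝ))
    (fbr : Θ → Z → ℝ) (θ : Θ) : ℝ :=
  if OptsIn P C F θ then ∫ z, fbr θ z ∂(P θ) else 0

/-- The menu `F = C·E` of all rescaled e-values within the
admissible class results in no fewer opting-in agents than any other
incentive-aligned menu `F' ⊆ F̄`, and in a larger expected market size, for every
finitely supported distribution over types and all best-response selections. -/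
theorem stmt_6
    (P : Θ → Measure Z) [∀ θ, IsProbabilityMeasure (P θ)]
    (Θ₀ : Set Θ) (C : ℝ) (hC : 0 < C)
    (Fbar : Set (Z → ℝ))
    (hmeas : ∀ f ∈ Fbar, Measurable f)
    (hnonneg : ∀ f ∈ Fbar, ∀ z, 0 ≤ f z)
    (hint : ∀ f ∈ Fbar, ∀ θ : Θ, Integrable f (P θ))
    -- `F` is the menu of all rescaled e-values within the admissible class:
    (F : Set (Z → ℝ))
    (hFdef : F = {f ∈ Fbar | ∀ θ₀ ∈ Θ₀, ∫ z, f z ∂(P θ₀) ≤ C})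
    -- `F'` is any other incentive-aligned menu within the admissible class:
    (F' : Set (Z → ℝ)) (hF' : F' ⊆ Fbar)
    (hIA' : ∀ θ₀ ∈ Θ₀, ∀ f ∈ F', ∫ z, f z ∂(P θ₀) ≤ C)
    (fbr : Θ → Z → ℝ) (hfbr : IsBRSelection P C F fbr)
    (fbr' : Θ → Z → ℝ) (hfbr' : IsBRSelection P C F' fbr')
    (s : Finset Θ) (w : Θ → ℝ)
    (hw : ∀ θ, 0 ≤ w θ) (hw1 : ∑ θ ∈ s, w θ = 1) :
    (∀ θ : Θ, OptsIn P C F' θ → OptsIn P C F θ) ∧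
    ∑ θ ∈ s, w θ * marketContrib P C F' fbr' θ ≤
      ∑ θ ∈ s, w θ * marketContrib P C F fbr θ := by
  have hsub : F' ⊆ F := by
    intro f hf
    rw [hFdef]
    exact ⟨hF' hf, fun θ₀ hθ₀ => hIA' θ₀ hθ₀ f hf⟩
  have hopt : ∀ θ : Θ, OptsIn P C F' θ → OptsIn P C F θ := by
    rintro θ ⟨f, hf, hfd⟩
    exact ⟨f, hsub hf, hfd⟩
  refine ⟨hopt, Finset.sum_le_sum fun θ _ => ?_⟩
  apply mul_le_mul_of_nonneg_left _ (hw θ)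
  unfold marketContrib
  by_cases h' : OptsIn P C F' θ
  · have h := hopt θ h'
    rw [if_pos h', if_pos h]
    exact (hfbr θ h).2 _ (hsub (hfbr' θ h').1)
  · rw [if_neg h']
    by_cases h : OptsIn P C F θ
    · rw [if_pos h]
      obtain ⟨g, hg, hgd⟩ := h
      calc (0:ℝ) ≤ C := hC.le
        _ ≤ ∫ z, g z ∂(P θ) := hgd.le
        _ ≤ _ := (hfbr θ ⟨g, hg, hgd⟩).2 g hg
    · rw [if_neg h]
end

section
/- Let P₀ and P₁ be probability measures on a measurable space Z with P₁ absolutely continuous with respect to P₀, let R ≥ C > 0 and λ > 0. Define f*(z) = R if (dP₁/dP₀)(z) > λ and f*(z) = 0 otherwise, and suppose ∫ f* dP₀ = C. Then for every measurable f : Z → [0,∞) with ∫ f dP₀ ≤ C, we have ∫ min(f(z), R) dP₁(z) ≤ ∫ min(f*(z), R) dP₁(z) = ∫ f* dP₁. That is, the all-or-nothing license given by thresholding the likelihood ratio at level λ (calibrated so its null expectation equals the trial cost C) maximizes the expected capped license value under the alternative among all incentive-aligned licenses. -/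
open MeasureTheory

/-- **Neyman–Pearson.** The all-or-nothing license obtained by
thresholding the likelihood ratio `dP₁/dP₀` at level `λ`, calibrated so that its
null expectation equals the trial cost `C`, maximizes the expected capped license
value under the alternative among all incentive-aligned licenses. -/
theorem stmt_8 {Z : Type*} [MeasurableSpace Z]
    (P₀ P₁ : Measure Z) [IsProbabilityMeasure P₀] [IsProbabilityMeasure P₁]
    (hac : P₁ ≪ P₀)
    (C R lam : ℝ) (hC : 0 < C) (hCR : C ≤ R) (hlam : 0 < lam)
    (fstar : Z → ℝ)
    (hfstar : ∀ z, fstar z =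
      if ENNReal.ofReal lam < P₁.rnDeriv P₀ z then R else 0)
    (hlevel : ∫ z, fstar z ∂P₀ = C) :
    ∀ f : Z → ℝ, Measurable f → (∀ z, 0 ≤ f z) →
      (∫⁻ z, ENNReal.ofReal (f z) ∂P₀) ≤ ENNReal.ofReal C →
      (∫ z, min (f z) R ∂P₁ ≤ ∫ z, min (fstar z) R ∂P₁ ∧
        ∫ z, min (fstar z) R ∂P₁ = ∫ z, fstar z ∂P₁) := by
  intro f hf hf0 hfC
  have hR : (0:ℝ) < R := lt_of_lt_of_le hC hCR
  have hfs_eq : fstar = fun z => if ENNReal.ofReal lam < P₁.rnDeriv P₀ z then R else 0 :=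
    funext hfstar
  have hfs_meas : Measurable fstar := by
    rw [hfs_eq]
    exact Measurable.ite
      (measurableSet_lt measurable_const (Measure.measurable_rnDeriv _ _))
      measurable_const measurable_const
  have hfs0 : ∀ z, 0 ≤ fstar z := by
    intro z; rw [hfstar z]; split <;> simp [hR.le]
  have hfsR : ∀ z, fstar z ≤ R := by
    intro z; rw [hfstar z]; split <;> simp [hR.le]
  set h : Z → ℝ := fun z => min (f z) R with hh
  have hh_meas : Measurable h := hf.min measurable_const
  have hh0 : ∀ z, 0 ≤ h z := fun z => le_min (hf0 z) hR.le
  have hhR : ∀ z, h z ≤ R := fun z => min_le_right _ _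
  -- integrability of bounded functions
  have bdd_int : ∀ (μ : Measure Z) [IsProbabilityMeasure μ] (u : Z → ℝ),
      Measurable u → (∀ z, 0 ≤ u z) → (∀ z, u z ≤ R) → Integrable u μ := by
    intro μ _ u hu hu0 huR
    refine (integrable_const R).mono' hu.aestronglyMeasurable ?_
    filter_upwards with z
    rw [Real.norm_eq_abs, abs_of_nonneg (hu0 z)]
    exact huR z
  have int_h0 : Integrable h P₀ := bdd_int P₀ h hh_meas hh0 hhR
  have int_h1 : Integrable h P₁ := bdd_int P₁ h hh_meas hh0 hhR
  have int_fs0 : Integrable fstar P₀ := bdd_int P₀ fstar hfs_meas hfs0 hfsR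
  have int_fs1 : Integrable fstar P₁ := bdd_int P₁ fstar hfs_meas hfs0 hfsR
  -- second claim
  have hmin : (fun z => min (fstar z) R) = fstar := by
    funext z; exact min_eq_left (hfsR z)
  have claim2 : ∫ z, min (fstar z) R ∂P₁ = ∫ z, fstar z ∂P₁ := by rw [hmin]
  refine ⟨?_, claim2⟩
  rw [claim2]
  -- ∫ h dP₀ ≤ C
  have hhC : ∫ z, h z ∂P₀ ≤ C := by
    have h1 : ∫ z, h z ∂P₀ = (∫⁻ z, ENNReal.ofReal (h z) ∂P₀).toReal :=
      integral_eq_lintegral_of_nonneg_ae (ae_of_all _ hh0) hh_meas.aestronglyMeasurable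
    have h2 : (∫⁻ z, ENNReal.ofReal (h z) ∂P₀) ≤ ENNReal.ofReal C := by
      refine le_trans (lintegral_mono fun z => ?_) hfC
      exact ENNReal.ofReal_le_ofReal (min_le_left _ _)
    rw [h1]
    calc (∫⁻ z, ENNReal.ofReal (h z) ∂P₀).toReal
        ≤ (ENNReal.ofReal C).toReal := ENNReal.toReal_mono ENNReal.ofReal_ne_top h2
      _ = C := ENNReal.toReal_ofReal hC.le
  -- D := fstar - h
  set D : Z → ℝ := fun z => fstar z - h z with hD
  have int_D0 : Integrable D P₀ := int_fs0.sub int_h0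
  have int_D1 : Integrable D P₁ := int_fs1.sub int_h1
  have int_gD : Integrable (fun z => (P₁.rnDeriv P₀ z).toReal • D z) P₀ :=
    (integrable_rnDeriv_smul_iff hac).mpr int_D1
  have key : ∀ᵐ z ∂P₀, lam * D z ≤ (P₁.rnDeriv P₀ z).toReal * D z := by
    filter_upwards [Measure.rnDeriv_ne_top P₁ P₀] with z hz
    by_cases hlt : ENNReal.ofReal lam < P₁.rnDeriv P₀ z
    · have hglam : lam < (P₁.rnDeriv P₀ z).toReal :=
        (ENNReal.ofReal_lt_iff_lt_toReal hlam.le hz).mp hlt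
      have hDpos : 0 ≤ D z := by
        simp only [hD, hfstar z, if_pos hlt]
        exact sub_nonneg.mpr (hhR z)
      exact mul_le_mul_of_nonneg_right hglam.le hDpos
    · have hle : P₁.rnDeriv P₀ z ≤ ENNReal.ofReal lam := not_lt.mp hlt
      have hglam : (P₁.rnDeriv P₀ z).toReal ≤ lam := by
        calc (P₁.rnDeriv P₀ z).toReal ≤ (ENNReal.ofReal lam).toReal :=
              ENNReal.toReal_mono ENNReal.ofReal_ne_top hle
          _ = lam := ENNReal.toReal_ofReal hlam.le
      have hDneg : D z ≤ 0 := by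
        simp only [hD, hfstar z, if_neg hlt]
        linarith [hh0 z]
      exact mul_le_mul_of_nonpos_right hglam hDneg
  have step : lam * ∫ z, D z ∂P₀ ≤ ∫ z, D z ∂P₁ := by
    calc lam * ∫ z, D z ∂P₀ = ∫ z, lam * D z ∂P₀ := (integral_const_mul lam _).symm
      _ ≤ ∫ z, (P₁.rnDeriv P₀ z).toReal * D z ∂P₀ := by
          refine integral_mono_ae (int_D0.const_mul lam) ?_ key
          simpa [smul_eq_mul] using int_gD
      _ = ∫ z, (P₁.rnDeriv P₀ z).toReal • D z ∂P₀ := by simp [smul_eq_mul]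
      _ = ∫ z, D z ∂P₁ := integral_rnDeriv_smul hac
  have hD0 : 0 ≤ ∫ z, D z ∂P₀ := by
    have : ∫ z, D z ∂P₀ = C - ∫ z, h z ∂P₀ := by
      rw [hD, integral_sub int_fs0 int_h0, hlevel]
    rw [this]; linarith
  have hD1 : ∫ z, D z ∂P₁ = ∫ z, fstar z ∂P₁ - ∫ z, h z ∂P₁ := by
    rw [hD, integral_sub int_fs1 int_h1]
  nlinarith [mul_nonneg hlam.le hD0]
end

section
/- Let (Ω, 𝓖, μ) be a probability space with a filtration (𝓕_t)_{t=0,…,T}, and let C_1, …, C_T ≥ 0 be constants. For t = 1,…,T, let I_t ∈ {0,1} and P_t ≥ 0 be 𝓕_{t−1}-measurable random variables, and let E_t ≥ 0 be an 𝓕_t-measurable integrable random variable with E[E_t | 𝓕_{t−1}] ≤ 1 almost surely. Define L_0 = 0 and, for t ≥ 1, require P_t ≤ L_{t−1} and set L_t = (L_{t−1} + C_t·I_t − P_t)·E_t on {I_t = 1} and L_t = L_{t−1} − P_t on {I_t = 0}; assume each L_t is integrable. Then the net-profit process N_t = L_t + Σ_{s=1}^t P_s − Σ_{s=1}^t C_s·I_s,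 with N_0 = 0, is a supermartingale with respect to (𝓕_t). -/
/-!
Write `B_t = I_{t+1} (L_t + C_{t+1} - P_{t+1})` for the stake put on the `(t+1)`-st trial. In both
branches of the recursion the net profit moves by `N_{t+1} - N_t = B_t (E_{t+1} - 1)`: a withdrawal
is booked into `Σ P_s` and leaves `N` unchanged, and a paid trial turns the stake `B_t` into
`B_t E_{t+1}`. Since `P_{t+1} ≤ L_t` and `C_{t+1} ≥ 0`, the stake is nonnegative and `𝓕_t`-measurable,
so pulling it out of the conditional expectation gives
`E[N_{t+1} - N_t | 𝓕_t] = B_t (E[E_{t+1} | 𝓕_t] - 1) ≤ 0`.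
-/

open MeasureTheory Filter

section BettingSupermartingale

variable {Ω : Type*} {m m0 : MeasurableSpace Ω} {μ : Measure Ω}

theorem condExp_one_sub_nonneg [IsFiniteMeasure μ] (hm : m ≤ m0) {E : Ω → ℝ}
    (hE : Integrable E μ) (hEcond : μ[E|m] ≤ᵐ[μ] 1) : 0 ≤ᵐ[μ] μ[1 - E|m] := by
  have hsub : μ[1 - E|m] =ᵐ[μ] μ[fun _ => 1|m] - μ[E|m] := condExp_sub (integrable_const 1) hE m
  filter_upwards [hsub, hEcond] with ω hsub hle
  rw [hsub, Pi.sub_apply, condExp_const hm]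
  exact sub_nonneg.mpr hle

theorem condExp_mul_nonneg_of_nonneg {B G : Ω → ℝ}
    (hB : StronglyMeasurable[m] B) (hBnonneg : 0 ≤ B) (hG : Integrable G μ)
    (hBG : Integrable (B * G) μ) (hGcond : 0 ≤ᵐ[μ] μ[G|m]) : 0 ≤ᵐ[μ] μ[B * G|m] := by
  filter_upwards [condExp_mul_of_stronglyMeasurable_left hB hBG hG, hGcond] with ω hmul hnonneg
  rw [hmul]
  exact mul_nonneg (hBnonneg ω) hnonneg

theorem supermartingale_of_sub_eq_mul_sub_one [IsFiniteMeasure μ] {ℱ : Filtration ℕ m0}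
    {f B E : ℕ → Ω → ℝ} (hf : StronglyAdapted ℱ f) (hfint : ∀ t, Integrable (f t) μ)
    (hB : ∀ t, StronglyMeasurable[ℱ t] (B t)) (hBnonneg : ∀ t, 0 ≤ B t)
    (hE : ∀ t, Integrable (E (t + 1)) μ) (hEcond : ∀ t, μ[E (t + 1)|ℱ t] ≤ᵐ[μ] 1)
    (hincr : ∀ t, f (t + 1) - f t = B t * (E (t + 1) - 1)) :
    Supermartingale f ℱ μ := by
  refine supermartingale_of_condExp_sub_nonneg_nat hf hfint fun t => ?_
  have hdecr : f t - f (t + 1) = B t * (1 - E (t + 1)) := by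
    rw [← neg_sub, hincr, ← mul_neg, neg_sub]
  rw [hdecr]
  refine condExp_mul_nonneg_of_nonneg (hB t) (hBnonneg t) ((integrable_const 1).sub (hE t))
    ?_ (condExp_one_sub_nonneg (ℱ.le t) (hE t) (hEcond t))
  rw [← hdecr]
  exact (hfint t).sub (hfint (t + 1))

end BettingSupermartingale

section LicenseContract

variable {Ω : Type*} {m0 : MeasurableSpace Ω} {μ : Measure Ω} {ℱ : Filtration ℕ m0}
  (Cc : ℕ → ℝ) (I P E L : ℕ → Ω → ℝ)

def netProfit (t : ℕ) (ω : Ω) : ℝ :=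
  L t ω + (∑ s ∈ Finset.range t, P (s + 1) ω) - ∑ s ∈ Finset.range t, Cc (s + 1) * I (s + 1) ω

def stake (t : ℕ) (ω : Ω) : ℝ :=
  I (t + 1) ω * (L t ω + Cc (t + 1) - P (t + 1) ω)

variable {Cc I P E L}

theorem netProfit_succ_sub (hI01 : ∀ t ω, I t ω = 0 ∨ I t ω = 1)
    (hLrec : ∀ t ω, L (t + 1) ω =
      if I (t + 1) ω = 1 then (L t ω + Cc (t + 1) - P (t + 1) ω) * E (t + 1) ω
      else L t ω - P (t + 1) ω) (t : ℕ) :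
    netProfit Cc I P L (t + 1) - netProfit Cc I P L t = stake Cc I P L t * (E (t + 1) - 1) := by
  funext ω
  simp only [Pi.sub_apply, Pi.mul_apply, Pi.one_apply, netProfit, stake, Finset.sum_range_succ, hLrec t ω]
  rcases hI01 (t + 1) ω with h | h <;> simp only [h, zero_ne_one, if_false, if_true] <;> ring

theorem stake_nonneg (hCc : ∀ t, 0 ≤ Cc t) (hI01 : ∀ t ω, I t ω = 0 ∨ I t ω = 1)
    (hPleL : ∀ t ω, P (t + 1) ω ≤ L t ω) (t : ℕ) : 0 ≤ stake Cc I P L t := fun ω => by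
  have hbet : 0 ≤ L t ω + Cc (t + 1) - P (t + 1) ω := by linarith [hPleL t ω, hCc (t + 1)]
  rcases hI01 (t + 1) ω with h | h <;> simp [stake, h, hbet]

theorem stronglyAdapted_license (hImeas : ∀ t, StronglyMeasurable[ℱ t] (I (t + 1)))
    (hPmeas : ∀ t, StronglyMeasurable[ℱ t] (P (t + 1)))
    (hEmeas : ∀ t, StronglyMeasurable[ℱ (t + 1)] (E (t + 1)))
    (hL0 : ∀ ω, L 0 ω = 0)
    (hLrec : ∀ t ω, L (t + 1) ω =
      if I (t + 1) ω = 1 then (L t ω + Cc (t + 1) - P (t + 1) ω) * E (t + 1) ω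
      else L t ω - P (t + 1) ω) :
    StronglyAdapted ℱ L := by
  intro t
  induction t with
  | zero =>
    rw [funext hL0]
    exact stronglyMeasurable_const
  | succ t ih =>
    have hmono := ℱ.mono (Nat.le_succ t)
    have hL := ih.mono hmono
    have hP := (hPmeas t).mono hmono
    rw [funext (hLrec t)]
    exact StronglyMeasurable.ite
      (measurableSet_eq_fun ((hImeas t).mono hmono).measurable measurable_const)
      (((hL.add stronglyMeasurable_const).sub hP).mul (hEmeas t)) (hL.sub hP)

theorem stronglyAdapted_netProfit (hImeas : ∀ t, StronglyMeasurable[ℱ t] (I (t + 1)))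
    (hPmeas : ∀ t, StronglyMeasurable[ℱ t] (P (t + 1))) (hL : StronglyAdapted ℱ L) :
    StronglyAdapted ℱ (netProfit Cc I P L) := fun t =>
  ((hL t).add (Finset.stronglyMeasurable_fun_sum _ fun s hs =>
    (hPmeas s).mono (ℱ.mono (Finset.mem_range.mp hs).le))).sub
    (Finset.stronglyMeasurable_fun_sum _ fun s hs =>
      ((hImeas s).mono (ℱ.mono (Finset.mem_range.mp hs).le)).const_mul _)

theorem stronglyMeasurable_stake (hImeas : ∀ t, StronglyMeasurable[ℱ t] (I (t + 1)))
    (hPmeas : ∀ t, StronglyMeasurable[ℱ t] (P (t + 1))) (hL : StronglyAdapted ℱ L) (t : ℕ) :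
    StronglyMeasurable[ℱ t] (stake Cc I P L t) :=
  (hImeas t).mul (((hL t).add stronglyMeasurable_const).sub (hPmeas t))

theorem integrable_netProfit [IsFiniteMeasure μ] (hI01 : ∀ t ω, I t ω = 0 ∨ I t ω = 1)
    (hImeas : ∀ t, StronglyMeasurable[ℱ t] (I (t + 1)))
    (hPmeas : ∀ t, StronglyMeasurable[ℱ t] (P (t + 1)))
    (hPnonneg : ∀ t ω, 0 ≤ P t ω) (hPleL : ∀ t ω, P (t + 1) ω ≤ L t ω)
    (hLint : ∀ t, Integrable (L t) μ) (t : ℕ) : Integrable (netProfit Cc I P L t) μ := by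
  have hP s : Integrable (P (s + 1)) μ :=
    integrable_of_le_of_le ((hPmeas s).mono (ℱ.le s)).aestronglyMeasurable
      (.of_forall (hPnonneg _)) (.of_forall (hPleL s)) (integrable_zero _ _ _) (hLint s)
  have hI s : Integrable (I (s + 1)) μ :=
    integrable_of_le_of_le ((hImeas s).mono (ℱ.le s)).aestronglyMeasurable
      (.of_forall fun ω => (hI01 (s + 1) ω).elim (·.symm.le) (· ▸ zero_le_one))
      (.of_forall fun ω => (hI01 (s + 1) ω).elim (· ▸ zero_le_one) (·.le))
      (integrable_zero _ _ _) (integrable_const (1 : ℝ))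
  exact ((hLint t).add (integrable_finsetSum _ fun s _ => hP s)).sub
    (integrable_finsetSum _ fun s _ => (hI s).const_mul _)

end LicenseContract

theorem stmt_9_general {Ω : Type*} {m0 : MeasurableSpace Ω}
    (μ : Measure Ω) [IsProbabilityMeasure μ]
    (ℱ : Filtration ℕ m0)
    (Cc : ℕ → ℝ) (hCc : ∀ t, 0 ≤ Cc t)
    (I P E : ℕ → Ω → ℝ)
    (hI01 : ∀ t ω, I t ω = 0 ∨ I t ω = 1)
    (hImeas : ∀ t, StronglyMeasurable[ℱ t] (I (t + 1)))
    (hPmeas : ∀ t, StronglyMeasurable[ℱ t] (P (t + 1)))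
    (hPnonneg : ∀ t ω, 0 ≤ P t ω)
    (hEmeas : ∀ t, StronglyMeasurable[ℱ (t + 1)] (E (t + 1)))
    (hEint : ∀ t, Integrable (E t) μ)
    (hEcond : ∀ t, μ[E (t + 1)|ℱ t] ≤ᵐ[μ] fun _ => (1 : ℝ))
    (L : ℕ → Ω → ℝ)
    (hL0 : ∀ ω, L 0 ω = 0)
    (hPleL : ∀ t ω, P (t + 1) ω ≤ L t ω)
    (hLrec : ∀ t ω, L (t + 1) ω =
      if I (t + 1) ω = 1 then (L t ω + Cc (t + 1) - P (t + 1) ω) * E (t + 1) ω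
      else L t ω - P (t + 1) ω)
    (hLint : ∀ t, Integrable (L t) μ) :
    Supermartingale
      (fun t ω => L t ω + (∑ s ∈ Finset.range t, P (s + 1) ω)
        - ∑ s ∈ Finset.range t, Cc (s + 1) * I (s + 1) ω) ℱ μ := by
  have hL := stronglyAdapted_license hImeas hPmeas hEmeas hL0 hLrec
  exact supermartingale_of_sub_eq_mul_sub_one (B := stake Cc I P L)
    (stronglyAdapted_netProfit hImeas hPmeas hL)
    (integrable_netProfit hI01 hImeas hPmeas hPnonneg hPleL hLint)
    (stronglyMeasurable_stake hImeas hPmeas hL) (stake_nonneg hCc hI01 hPleL)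
    (fun t => hEint (t + 1)) hEcond (netProfit_succ_sub hI01 hLrec)

/-- In the multi-round statistical contract under a null agent
type—where the license `L` starts at `0`, at each stage the agent may withdraw
`P_t ≤ L_{t-1}` and may pay `C_t` (indicator `I_t`) to multiply the license by a
conditional e-value `E_t` (with `E[E_t | 𝓕_{t-1}] ≤ 1`)—the net-profit process
`N_t = L_t + Σ_{s≤t} P_s − Σ_{s≤t} C_s·I_s` is a supermartingale. -/
theorem stmt_9 {Ω : Type*} {m0 : MeasurableSpace Ω}
    (μ : Measure Ω) [IsProbabilityMeasure μ]
    (ℱ : Filtration ℕ m0)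
    (Cc : ℕ → ℝ) (hCc : ∀ t, 0 ≤ Cc t)
    (I P E : ℕ → Ω → ℝ)
    (hI01 : ∀ t ω, I t ω = 0 ∨ I t ω = 1)
    (hImeas : ∀ t, StronglyMeasurable[ℱ t] (I (t + 1)))
    (hPmeas : ∀ t, StronglyMeasurable[ℱ t] (P (t + 1)))
    (hPnonneg : ∀ t ω, 0 ≤ P t ω)
    (hEmeas : ∀ t, StronglyMeasurable[ℱ (t + 1)] (E (t + 1)))
    (hEnonneg : ∀ t ω, 0 ≤ E t ω)
    (hEint : ∀ t, Integrable (E t) μ)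
    (hEcond : ∀ t, μ[E (t + 1)|ℱ t] ≤ᵐ[μ] fun _ => (1 : ℝ))
    (L : ℕ → Ω → ℝ)
    (hL0 : ∀ ω, L 0 ω = 0)
    (hPleL : ∀ t ω, P (t + 1) ω ≤ L t ω)
    (hLrec : ∀ t ω, L (t + 1) ω =
      if I (t + 1) ω = 1 then (L t ω + Cc (t + 1) - P (t + 1) ω) * E (t + 1) ω
      else L t ω - P (t + 1) ω)
    (hLint : ∀ t, Integrable (L t) μ) :
    Supermartingale
      (fun t ω => L t ω + (∑ s ∈ Finset.range t, P (s + 1) ω)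
        - ∑ s ∈ Finset.range t, Cc (s + 1) * I (s + 1) ω) ℱ μ :=
  stmt_9_general μ ℱ Cc hCc I P E hI01 hImeas hPmeas hPnonneg hEmeas hEint hEcond L hL0 hPleL hLrec
    hLint
end

section
/- Let θ ∈ ℝ and define f*(y) = exp(2θy − 2θ²). Then: (i) ∫ f*(y) dN(0,1)(y) = 1, so f* is an e-value for the null N(0,1); (ii) for every measurable f : ℝ → [0,∞) with ∫ f(y) dN(0,1)(y) ≤ 1, one has ∫ 2·√(f(y)) dN(θ,1)(y) ≤ 2·exp(θ²/2); and (iii) equality holds in (ii) for f = f*, i.e., ∫ 2·√(f*(y)) dN(θ,1)(y) = 2·exp(θ²/2). Hence f* is the optimal e-value for an agent with value function v(x) = 2√x in the Gaussian location model. -/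
open MeasureTheory ProbabilityTheory

open scoped ENNReal NNReal

lemma pdf_shift (m a y : ℝ) :
    Real.exp (a * y) * gaussianPDFReal m 1 y
      = Real.exp (a * m + a ^ 2 / 2) * gaussianPDFReal (m + a) 1 y := by
  simp only [gaussianPDFReal]
  rw [mul_left_comm, mul_left_comm (Real.exp _), ← Real.exp_add, ← Real.exp_add]
  norm_num
  ring_nf
  tauto

lemma integral_exp_gaussian (m a b : ℝ) :
    ∫ y, Real.exp (a * y + b) ∂(gaussianReal m 1) = Real.exp (a * m + a ^ 2 / 2 + b) := by
  rw [gaussianReal_of_var_ne_zero m one_ne_zero]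
  have hpdf : gaussianPDF m 1 = fun y => ((gaussianPDFReal m 1 y).toNNReal : ℝ≥0∞) := by
    funext y; rfl
  rw [hpdf, integral_withDensity_eq_integral_smul
    ((measurable_gaussianPDFReal m 1).real_toNNReal)]
  have : ∀ y : ℝ, (gaussianPDFReal m 1 y).toNNReal • Real.exp (a * y + b)
      = Real.exp (a * m + a ^ 2 / 2 + b) * gaussianPDFReal (m + a) 1 y := by
    intro y
    rw [NNReal.smul_def, smul_eq_mul, Real.coe_toNNReal _ (gaussianPDFReal_nonneg m 1 y)]
    have h := pdf_shift m a y
    simp only [Real.exp_add] at h ⊢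
    linear_combination Real.exp b * h
  simp_rw [this]
  rw [integral_const_mul, integral_gaussianPDFReal_eq_one (m + a) one_ne_zero, mul_one]

lemma integrable_exp_gaussian (m a b : ℝ) :
    Integrable (fun y => Real.exp (a * y + b)) (gaussianReal m 1) := by
  rw [gaussianReal_of_var_ne_zero m one_ne_zero]
  have hpdf : gaussianPDF m 1 = fun y => ((gaussianPDFReal m 1 y).toNNReal : ℝ≥0∞) := by
    funext y; rfl
  rw [hpdf, integrable_withDensity_iff_integrable_smul
    ((measurable_gaussianPDFReal m 1).real_toNNReal)]
  have : ∀ y : ℝ, (gaussianPDFReal m 1 y).toNNReal • Real.exp (a * y + b)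
      = Real.exp (a * m + a ^ 2 / 2 + b) * gaussianPDFReal (m + a) 1 y := by
    intro y
    rw [NNReal.smul_def, smul_eq_mul, Real.coe_toNNReal _ (gaussianPDFReal_nonneg m 1 y)]
    have h := pdf_shift m a y
    simp only [Real.exp_add] at h ⊢
    linear_combination Real.exp b * h
  simp_rw [this]
  exact (integrable_gaussianPDFReal (m + a) 1).const_mul _

lemma pdf_tilt (θ y : ℝ) :
    Real.exp (θ ^ 2 - θ * y) * gaussianPDFReal θ 1 y
      = Real.exp (θ ^ 2 / 2) * gaussianPDFReal 0 1 y := by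
  have h := pdf_shift θ (-θ) y
  rw [show θ + -θ = (0:ℝ) by ring] at h
  have : Real.exp (θ ^ 2 - θ * y) = Real.exp (θ ^ 2) * Real.exp (-θ * y) := by
    rw [← Real.exp_add]; ring_nf
  rw [this, mul_assoc, h, ← mul_assoc, ← Real.exp_add]
  ring_nf

lemma lint_tilt (θ : ℝ) {f : ℝ → ℝ} (hf : Measurable f) :
    ∫⁻ y, ENNReal.ofReal (f y * Real.exp (θ ^ 2 - θ * y)) ∂(gaussianReal θ 1)
      = ENNReal.ofReal (Real.exp (θ ^ 2 / 2))
        * ∫⁻ y, ENNReal.ofReal (f y) ∂(gaussianReal 0 1) := by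
  have key : ∀ y : ℝ, Real.exp (θ ^ 2 / 2) * (gaussianPDFReal 0 1 y * f y)
      = gaussianPDFReal θ 1 y * f y * Real.exp (θ ^ 2 - θ * y) := by
    intro y
    linear_combination (-(f y)) * (pdf_tilt θ y)
  rw [gaussianReal_of_var_ne_zero θ one_ne_zero, gaussianReal_of_var_ne_zero 0 one_ne_zero,
    lintegral_withDensity_eq_lintegral_mul _ (measurable_gaussianPDF θ 1)
      (by exact (hf.mul (((measurable_id.const_mul θ).const_sub (θ ^ 2)).exp)).ennreal_ofReal),
    lintegral_withDensity_eq_lintegral_mul _ (measurable_gaussianPDF 0 1) hf.ennreal_ofReal,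
    ← lintegral_const_mul _ (by exact ((measurable_gaussianPDF 0 1).mul hf.ennreal_ofReal))]
  refine lintegral_congr fun y => ?_
  simp only [Pi.mul_apply, gaussianPDF]
  rw [← ENNReal.ofReal_mul (gaussianPDFReal_nonneg θ 1 y),
    ← ENNReal.ofReal_mul (gaussianPDFReal_nonneg 0 1 y),
    ← ENNReal.ofReal_mul (Real.exp_nonneg _), key, mul_assoc]

/-- In the Gaussian location model, `f*(y) = exp(2θy − 2θ²)`:
(i) is an e-value for the null `N(0,1)`; (ii) every e-value `f` for `N(0,1)`
satisfies `∫ 2√(f) dN(θ,1) ≤ 2·exp(θ²/2)`; and (iii) `f*` attains this bound.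
Hence `f*` is the optimal e-value for an agent with value function `v(x) = 2√x`. -/
theorem stmt_13 (θ : ℝ) :
    (∫ y, Real.exp (2 * θ * y - 2 * θ ^ 2) ∂(gaussianReal 0 1) = 1) ∧
    (∀ f : ℝ → ℝ, Measurable f → (∀ y, 0 ≤ f y) →
      (∫⁻ y, ENNReal.ofReal (f y) ∂(gaussianReal 0 1)) ≤ 1 →
      ∫ y, 2 * Real.sqrt (f y) ∂(gaussianReal θ 1) ≤ 2 * Real.exp (θ ^ 2 / 2)) ∧
    (∫ y, 2 * Real.sqrt (Real.exp (2 * θ * y - 2 * θ ^ 2)) ∂(gaussianReal θ 1) =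
      2 * Real.exp (θ ^ 2 / 2)) := by
  refine ⟨?_, ?_, ?_⟩
  · have h := integral_exp_gaussian 0 (2 * θ) (-(2 * θ ^ 2))
    rw [show 2 * θ * 0 + (2 * θ) ^ 2 / 2 + -(2 * θ ^ 2) = 0 by ring, Real.exp_zero] at h
    simpa [sub_eq_add_neg] using h
  · intro f hf hf0 hle
    set a : ℝ → ℝ := fun y => f y * Real.exp (θ ^ 2 - θ * y) with ha
    set b : ℝ → ℝ := fun y => Real.exp (θ * y - θ ^ 2) with hb
    have han : ∀ y, 0 ≤ a y := fun y => mul_nonneg (hf0 y) (Real.exp_nonneg _)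
    have hab : ∀ y, 2 * Real.sqrt (f y) ≤ a y + b y := by
      intro y
      have h1 : Real.sqrt (a y) * Real.sqrt (b y) = Real.sqrt (f y) := by
        rw [← Real.sqrt_mul (han y)]
        congr 1
        rw [ha, hb]
        simp only
        rw [mul_assoc, ← Real.exp_add, show θ ^ 2 - θ * y + (θ * y - θ ^ 2) = 0 by ring,
          Real.exp_zero, mul_one]
      nlinarith [sq_nonneg (Real.sqrt (a y) - Real.sqrt (b y)),
        Real.sq_sqrt (han y), Real.sq_sqrt (show 0 ≤ b y by positivity)]
    have hbint : Integrable b (gaussianReal θ 1) := by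
      have := integrable_exp_gaussian θ θ (-θ ^ 2)
      simpa [hb, sub_eq_add_neg] using this
    have hameas : Measurable a :=
      hf.mul (((measurable_id.const_mul θ).const_sub (θ ^ 2)).exp)
    have hlint : ∫⁻ y, ENNReal.ofReal (a y) ∂(gaussianReal θ 1)
        ≤ ENNReal.ofReal (Real.exp (θ ^ 2 / 2)) := by
      rw [ha]
      rw [lint_tilt θ hf]
      calc ENNReal.ofReal (Real.exp (θ ^ 2 / 2)) * ∫⁻ y, ENNReal.ofReal (f y) ∂(gaussianReal 0 1)
          ≤ ENNReal.ofReal (Real.exp (θ ^ 2 / 2)) * 1 := by gcongr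
        _ = ENNReal.ofReal (Real.exp (θ ^ 2 / 2)) := mul_one _
    have haint : Integrable a (gaussianReal θ 1) := by
      refine ⟨hameas.aestronglyMeasurable, ?_⟩
      rw [hasFiniteIntegral_iff_ofReal (ae_of_all _ han)]
      exact lt_of_le_of_lt hlint ENNReal.ofReal_lt_top
    have hbval : ∫ y, b y ∂(gaussianReal θ 1) = Real.exp (θ ^ 2 / 2) := by
      have := integral_exp_gaussian θ θ (-θ ^ 2)
      rw [show θ * θ + θ ^ 2 / 2 + -θ ^ 2 = θ ^ 2 / 2 by ring] at this
      simpa [hb, sub_eq_add_neg] using this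
    have haval : ∫ y, a y ∂(gaussianReal θ 1) ≤ Real.exp (θ ^ 2 / 2) := by
      rw [integral_eq_lintegral_of_nonneg_ae (ae_of_all _ han)
        hameas.aestronglyMeasurable]
      exact ENNReal.toReal_le_of_le_ofReal (Real.exp_nonneg _) hlint
    calc ∫ y, 2 * Real.sqrt (f y) ∂(gaussianReal θ 1)
        ≤ ∫ y, (a y + b y) ∂(gaussianReal θ 1) :=
          integral_mono_of_nonneg (ae_of_all _ fun y => by positivity) (haint.add hbint)
            (ae_of_all _ hab)
      _ = (∫ y, a y ∂(gaussianReal θ 1)) + ∫ y, b y ∂(gaussianReal θ 1) :=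
          integral_add haint hbint
      _ ≤ Real.exp (θ ^ 2 / 2) + Real.exp (θ ^ 2 / 2) := by rw [hbval]; gcongr
      _ = 2 * Real.exp (θ ^ 2 / 2) := by ring
  · have hs : ∀ y : ℝ, 2 * Real.sqrt (Real.exp (2 * θ * y - 2 * θ ^ 2))
        = 2 * Real.exp (θ * y + -θ ^ 2) := by
      intro y
      rw [← Real.exp_half]
      congr 2
      ring
    simp_rw [hs]
    rw [integral_const_mul, integral_exp_gaussian θ θ (-θ ^ 2),
      show θ * θ + θ ^ 2 / 2 + -θ ^ 2 = θ ^ 2 / 2 by ring]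
end
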